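/- Let Z be the zero matrix in M₃⁰(ℤ/8ℤ). Then η(Z, 3, K)/(8192·64^{K−3}) → 1/57344 as K → ∞. -/

import Mathlib

open Filter

/-- `ord2 K t`: the largest `j ≤ K` such that `t` is divisible by `2^j` in `ℤ/2^Kℤ`
(so `ord2 K 0 = K`). -/
noncomputable def ord2 (K : ℕ) (t : ZMod (2 ^ K)) : ℕ :=
  sSup {j : ℕ | j ≤ K ∧ (2 : ZMod (2 ^ K)) ^ j ∣ t}

/-- For `M = [[α,β,0],[γ,δ,0],[e,f,0]]`, `Af M = γf - δe`. -/
def Af {n : ℕ} (M : Matrix (Fin 3) (Fin 3) (ZMod n)) : ZMod n :=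
  M 1 0 * M 2 1 - M 1 1 * M 2 0

/-- For `M = [[α,β,0],[γ,δ,0],[e,f,0]]`, `Bf M = αf - βe`. -/
def Bf {n : ℕ} (M : Matrix (Fin 3) (Fin 3) (ZMod n)) : ZMod n :=
  M 0 0 * M 2 1 - M 0 1 * M 2 0

/-- For `M = [[α,β,0],[γ,δ,0],[e,f,0]]`, `Cf M = αδ - βγ`. -/
def Cf {n : ℕ} (M : Matrix (Fin 3) (Fin 3) (ZMod n)) : ZMod n :=
  M 0 0 * M 1 1 - M 0 1 * M 1 0

/-- `eta r K M₀` is the number of `3 × 3` matrices `M` over `ℤ/2^Kℤ` with third column zero,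
reducing to `M₀` mod `2^r`, with `ord₂(A(M)) > ord₂(B(M))` and `ord₂(C(M)) > ord₂(B(M))`. -/
noncomputable def eta (r K : ℕ) (M₀ : Matrix (Fin 3) (Fin 3) (ZMod (2 ^ r))) : ℕ :=
  Nat.card {M : Matrix (Fin 3) (Fin 3) (ZMod (2 ^ K)) //
    (∀ i, M i 2 = 0) ∧
    (∀ i j, (((M i j).val : ZMod (2 ^ r))) = M₀ i j) ∧
    ord2 K (Bf M) < ord2 K (Af M) ∧ ord2 K (Bf M) < ord2 K (Cf M)}

set_option maxHeartbeats 2000000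

namespace Density


lemma card_sigma' {ι : Type*} [Fintype ι] (f : ι → Type*) [∀ i, Finite (f i)] :
    Nat.card (Σ i, f i) = ∑ i, Nat.card (f i) := by
  classical
  haveI := fun i => Fintype.ofFinite (f i)
  simp [Nat.card_eq_fintype_card]

lemma card_prod_fiber {α β : Type*} [Finite α] [Finite β] (P : α → Prop) (Q : α → β → Prop)
    (c : ℕ) (h : ∀ a, P a → Nat.card {b // Q a b} = c) :
    Nat.card {p : α × β // P p.1 ∧ Q p.1 p.2} = Nat.card {a // P a} * c := by
  classical
  haveI := Fintype.ofFinite α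
  have e : {p : α × β // P p.1 ∧ Q p.1 p.2} ≃ Σ a : {a // P a}, {b // Q a.1 b} :=
    { toFun := fun x => ⟨⟨x.1.1, x.2.1⟩, ⟨x.1.2, x.2.2⟩⟩
      invFun := fun s => ⟨(s.1.1, s.2.1), s.1.2, s.2.2⟩
      left_inv := fun x => by rfl
      right_inv := fun s => by rfl }
  rw [Nat.card_congr e, card_sigma']
  have : ∀ a : {a // P a}, Nat.card {b // Q a.1 b} = c := fun a => h a.1 a.2
  rw [Finset.sum_congr rfl (fun a _ => this a), Finset.sum_const, Finset.card_univ,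
    ← Nat.card_eq_fintype_card]
  ring

lemma card_comap {β γ : Type*} [Finite β] [Finite γ] (g : β → γ) (Q : γ → Prop) (d : ℕ)
    (hfib : ∀ c, Nat.card {b // g b = c} = d) :
    Nat.card {b // Q (g b)} = d * Nat.card {c // Q c} := by
  classical
  haveI := Fintype.ofFinite γ
  have e : (Σ c : {c // Q c}, {b // g b = c.1}) ≃ {b // Q (g b)} :=
    { toFun := fun s => ⟨s.2.1, by rw [s.2.2]; exact s.1.2⟩
      invFun := fun b => ⟨⟨g b.1, b.2⟩, ⟨b.1, rfl⟩⟩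
      left_inv := fun s => by
        rcases s with ⟨⟨c, hc⟩, ⟨b, hb⟩⟩
        have hb' : g b = c := hb
        subst hb'
        rfl
      right_inv := fun b => by rfl }
  rw [← Nat.card_congr e, card_sigma']
  rw [Finset.sum_congr rfl (fun a _ => hfib a.1), Finset.sum_const, Finset.card_univ,
    ← Nat.card_eq_fintype_card]
  ring

lemma card_split {α : Type*} [Finite α] (P R : α → Prop) :
    Nat.card {x // P x} = Nat.card {x // P x ∧ R x} + Nat.card {x // P x ∧ ¬ R x} := by
  classical
  calc Nat.card {x // P x}
      = Nat.card ({y : {x // P x} // R y.1} ⊕ {y : {x // P x} // ¬ R y.1}) :=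
        (Nat.card_congr (Equiv.sumCompl fun y : {x // P x} => R y.1)).symm
    _ = _ := by
        rw [Nat.card_sum]
        congr 1
        · exact Nat.card_congr (Equiv.subtypeSubtypeEquivSubtypeInter P R)
        · exact Nat.card_congr (Equiv.subtypeSubtypeEquivSubtypeInter P (fun x => ¬ R x))

lemma card_empty_of {α : Type*} (P : α → Prop) (h : ∀ x, ¬ P x) : Nat.card {x // P x} = 0 := by
  haveI : IsEmpty {x // P x} := ⟨fun x => h x.1 x.2⟩
  exact Nat.card_of_isEmpty

lemma card_iff {α : Type*} (P Q : α → Prop) (h : ∀ x, P x ↔ Q x) :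
    Nat.card {x // P x} = Nat.card {x // Q x} :=
  Nat.card_congr (Equiv.subtypeEquivRight h)



lemma ord2_set_nonempty (K : ℕ) (t : ZMod (2 ^ K)) :
    {j : ℕ | j ≤ K ∧ (2 : ZMod (2 ^ K)) ^ j ∣ t}.Nonempty :=
  ⟨0, Nat.zero_le K, by simpa using one_dvd t⟩

lemma ord2_set_bdd (K : ℕ) (t : ZMod (2 ^ K)) :
    BddAbove {j : ℕ | j ≤ K ∧ (2 : ZMod (2 ^ K)) ^ j ∣ t} :=
  ⟨K, fun _ h => h.1⟩

lemma ord2_le (K : ℕ) (t : ZMod (2 ^ K)) : ord2 K t ≤ K :=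
  csSup_le (ord2_set_nonempty K t) (fun _ h => h.1)

lemma ord2_dvd (K : ℕ) (t : ZMod (2 ^ K)) : (2 : ZMod (2 ^ K)) ^ (ord2 K t) ∣ t :=
  (Nat.sSup_mem (ord2_set_nonempty K t) (ord2_set_bdd K t)).2

lemma le_ord2 {K j : ℕ} {t : ZMod (2 ^ K)} (hj : j ≤ K)
    (hd : (2 : ZMod (2 ^ K)) ^ j ∣ t) : j ≤ ord2 K t :=
  le_csSup (ord2_set_bdd K t) ⟨hj, hd⟩

lemma lt_ord2_iff {K s : ℕ} {t : ZMod (2 ^ K)} :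
    s < ord2 K t ↔ s < K ∧ (2 : ZMod (2 ^ K)) ^ (s + 1) ∣ t := by
  constructor
  · intro h
    have h1 : ord2 K t ≤ K := ord2_le K t
    have h2 := ord2_dvd K t
    exact ⟨lt_of_lt_of_le h h1,
      dvd_trans (pow_dvd_pow 2 (Nat.succ_le_of_lt h)) h2⟩
  · rintro ⟨h1, h2⟩
    exact Nat.lt_of_succ_le (le_ord2 h1 h2)

lemma ord2_zero (K : ℕ) : ord2 K (0 : ZMod (2 ^ K)) = K :=
  le_antisymm (ord2_le K 0) (le_ord2 le_rfl (dvd_zero _))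

lemma ord2_neg (K : ℕ) (t : ZMod (2 ^ K)) : ord2 K (-t) = ord2 K t := by
  unfold ord2; congr 1; ext j; simp [dvd_neg]

lemma ord2_unit_mul {K : ℕ} {u : ZMod (2 ^ K)} (hu : IsUnit u) (t : ZMod (2 ^ K)) :
    ord2 K (u * t) = ord2 K t := by
  unfold ord2; congr 1; ext j
  simp [IsUnit.dvd_mul_left hu]



instance pow2NeZero (n : ℕ) : NeZero (2 ^ n) := ⟨pow_ne_zero n two_ne_zero⟩

lemma cast_pow2_self (m : ℕ) : ((2 : ZMod (2 ^ m))) ^ m = 0 := by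
  have : ((2 ^ m : ℕ) : ZMod (2 ^ m)) = 0 := ZMod.natCast_self _
  push_cast at this
  exact this

/-- mod-killing lemma -/
lemma cast_mod_pow2 {n m : ℕ} (h : n ≤ m) (a : ℕ) :
    ((a % 2 ^ m : ℕ) : ZMod (2 ^ n)) = (a : ZMod (2 ^ n)) := by
  conv_rhs => rw [← Nat.div_add_mod a (2 ^ m)]
  push_cast
  have : ((2 ^ m : ℕ) : ZMod (2 ^ n)) = 0 :=
    (ZMod.natCast_eq_zero_iff _ _).mpr (pow_dvd_pow 2 h)
  push_cast at this
  rw [this]; ring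

lemma dvd_iff_val_dvd {m j : ℕ} (hj : j ≤ m) (x : ZMod (2 ^ m)) :
    (2 : ZMod (2 ^ m)) ^ j ∣ x ↔ 2 ^ j ∣ x.val := by
  constructor
  · rintro ⟨t, rfl⟩
    rw [ZMod.val_mul]
    refine (Nat.dvd_mod_iff (pow_dvd_pow 2 hj)).mpr (Dvd.dvd.mul_right ?_ _)
    have h2 : ((2 : ZMod (2 ^ m)) ^ j).val = 2 ^ j % 2 ^ m := by
      have : ((2 : ZMod (2 ^ m)) ^ j) = ((2 ^ j : ℕ) : ZMod (2 ^ m)) := by push_cast; ring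
      rw [this, ZMod.val_natCast]
    rw [h2]
    exact (Nat.dvd_mod_iff (pow_dvd_pow 2 hj)).mpr dvd_rfl
  · rintro ⟨t, ht⟩
    have hx : ((x.val : ℕ) : ZMod (2 ^ m)) = x := by
      rw [ZMod.natCast_val, ZMod.cast_id]
    rw [← hx, ht]
    push_cast
    exact Dvd.intro t rfl

/-- scaling-up map -/
noncomputable def mu (n k : ℕ) (x : ZMod (2 ^ n)) : ZMod (2 ^ (n + k)) :=
  ((2 ^ k * x.val : ℕ) : ZMod (2 ^ (n + k)))

lemma mu_val {n k : ℕ} (x : ZMod (2 ^ n)) : (mu n k x).val = 2 ^ k * x.val := by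
  rw [mu, ZMod.val_natCast, Nat.mod_eq_of_lt]
  calc 2 ^ k * x.val < 2 ^ k * 2 ^ n :=
        (Nat.mul_lt_mul_left (Nat.two_pow_pos k)).mpr (ZMod.val_lt x)
    _ = 2 ^ (n + k) := by rw [← pow_add]; ring_nf

lemma mu_inj {n k : ℕ} {x y : ZMod (2 ^ n)} (h : mu n k x = mu n k y) : x = y := by
  have := congrArg ZMod.val h
  rw [mu_val, mu_val] at this
  have hv : x.val = y.val := Nat.eq_of_mul_eq_mul_left (Nat.two_pow_pos k) this
  have := congrArg (Nat.cast : ℕ → ZMod (2 ^ n)) hv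
  rwa [ZMod.natCast_val, ZMod.natCast_val, ZMod.cast_id, ZMod.cast_id] at this

lemma cast_pow_mul_mod {n k : ℕ} (c a : ℕ) :
    ((2 ^ k * (c * (a % 2 ^ n)) : ℕ) : ZMod (2 ^ (n + k)))
      = ((2 ^ k * (c * a) : ℕ) : ZMod (2 ^ (n + k))) := by
  have key : 2 ^ k * (c * a) = 2 ^ (n + k) * (c * (a / 2 ^ n)) + 2 ^ k * (c * (a % 2 ^ n)) := by
    conv_lhs => rw [← Nat.div_add_mod a (2 ^ n)]
    rw [pow_add]; ring
  rw [key]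
  push_cast
  rw [cast_pow2_self (n + k)]
  ring

lemma mu_add {n k : ℕ} (x y : ZMod (2 ^ n)) : mu n k (x + y) = mu n k x + mu n k y := by
  rw [mu, mu, mu, ZMod.val_add]
  have := cast_pow_mul_mod (n := n) (k := k) 1 (x.val + y.val)
  rw [one_mul, one_mul] at this
  rw [this]
  push_cast; ring

lemma mu_sub {n k : ℕ} (x y : ZMod (2 ^ n)) : mu n k (x - y) = mu n k x - mu n k y := by
  have := mu_add (n := n) (k := k) (x - y) y
  rw [sub_add_cancel] at this
  rw [this]; ring

lemma mu_dvd {n k : ℕ} (x : ZMod (2 ^ n)) : (2 : ZMod (2 ^ (n + k))) ^ k ∣ mu n k x := by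
  rw [mu]
  push_cast
  exact Dvd.intro _ rfl

lemma mu_surj {n k : ℕ} (z : ZMod (2 ^ (n + k))) (hz : (2 : ZMod (2 ^ (n + k))) ^ k ∣ z) :
    ∃ x : ZMod (2 ^ n), mu n k x = z := by
  have hkv : 2 ^ k ∣ z.val := (dvd_iff_val_dvd (Nat.le_add_left k n) z).mp hz
  obtain ⟨t, ht⟩ := hkv
  refine ⟨((t : ℕ) : ZMod (2 ^ n)), ?_⟩
  have htlt : t < 2 ^ n := by
    have := ZMod.val_lt z
    rw [ht] at this
    have h2 : 2 ^ k * t < 2 ^ k * 2 ^ n := by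
      calc 2 ^ k * t < 2 ^ (n + k) := this
        _ = 2 ^ k * 2 ^ n := by rw [← pow_add]; ring_nf
    exact Nat.lt_of_mul_lt_mul_left h2
  rw [mu, ZMod.val_natCast, Nat.mod_eq_of_lt htlt, ← ht, ZMod.natCast_val, ZMod.cast_id]

/-- cast-down map -/
noncomputable def cd (m n : ℕ) (z : ZMod (2 ^ m)) : ZMod (2 ^ n) :=
  ((z.val : ℕ) : ZMod (2 ^ n))

lemma cd_add {m n : ℕ} (h : n ≤ m) (x y : ZMod (2 ^ m)) :
    cd m n (x + y) = cd m n x + cd m n y := by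
  rw [cd, cd, cd, ZMod.val_add, cast_mod_pow2 h]
  push_cast; ring

lemma cd_mul {m n : ℕ} (h : n ≤ m) (x y : ZMod (2 ^ m)) :
    cd m n (x * y) = cd m n x * cd m n y := by
  rw [cd, cd, cd, ZMod.val_mul, cast_mod_pow2 h]
  push_cast; ring

lemma cd_surj {m n : ℕ} (h : n ≤ m) (y : ZMod (2 ^ n)) : ∃ z, cd m n z = y := by
  refine ⟨((y.val : ℕ) : ZMod (2 ^ m)), ?_⟩
  rw [cd, ZMod.val_natCast, Nat.mod_eq_of_lt (lt_of_lt_of_le (ZMod.val_lt y) (Nat.pow_le_pow_right (by norm_num) h)),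
    ZMod.natCast_val, ZMod.cast_id]

/-- `mu` multiplied by arbitrary element -/
lemma mu_mul_cd {n k : ℕ} (a : ZMod (2 ^ n)) (z : ZMod (2 ^ (n + k))) :
    mu n k a * z = mu n k (a * cd (n + k) n z) := by
  have hz : ((z.val : ℕ) : ZMod (2 ^ (n + k))) = z := by
    rw [ZMod.natCast_val, ZMod.cast_id]
  conv_lhs => rw [← hz]
  rw [mu, mu, ZMod.val_mul, cd, ZMod.val_natCast]
  have h1 := cast_pow_mul_mod (n := n) (k := k) 1 (a.val * (z.val % 2 ^ n))
  rw [one_mul, one_mul] at h1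
  rw [h1, cast_pow_mul_mod (n := n) (k := k) a.val z.val]
  push_cast
  ring




lemma mu_ord {n k : ℕ} (x : ZMod (2 ^ n)) :
    ord2 (n + k) (mu n k x) = k + ord2 n x := by
  set o := ord2 n x with ho
  apply le_antisymm
  · by_contra hcon
    push_neg at hcon
    obtain ⟨h1, h2⟩ := lt_ord2_iff.mp hcon
    have hon : o < n := by omega
    have hval : 2 ^ (k + o + 1) ∣ (mu n k x).val :=
      (dvd_iff_val_dvd (by omega) _).mp h2
    rw [mu_val] at hval
    obtain ⟨t, ht⟩ := hval
    have hx : x.val = 2 ^ (o + 1) * t := by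
      have hpow : 2 ^ (k + o + 1) = 2 ^ k * 2 ^ (o + 1) := by rw [← pow_add]; ring_nf
      rw [hpow, mul_assoc] at ht
      exact Nat.eq_of_mul_eq_mul_left (Nat.two_pow_pos k) ht
    have : o < ord2 n x :=
      lt_ord2_iff.mpr ⟨hon, (dvd_iff_val_dvd (by omega) x).mpr ⟨t, hx⟩⟩
    omega
  · apply le_ord2 (by have := ord2_le n x; omega)
    have : 2 ^ o ∣ x.val := (dvd_iff_val_dvd (ord2_le n x) x).mp (ord2_dvd n x)
    obtain ⟨t, ht⟩ := this
    rw [mu, ht]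
    refine ⟨((t : ℕ) : ZMod (2 ^ (n + k))), ?_⟩
    push_cast
    ring

lemma cd_sub {m n : ℕ} (h : n ≤ m) (x y : ZMod (2 ^ m)) :
    cd m n (x - y) = cd m n x - cd m n y := by
  have := cd_add h (x - y) y
  rw [sub_add_cancel] at this
  rw [this]; ring

/-- mu as an equivalence onto divisibles -/
noncomputable def muEquiv (n k : ℕ) :
    ZMod (2 ^ n) ≃ {z : ZMod (2 ^ (n + k)) // (2 : ZMod (2 ^ (n + k))) ^ k ∣ z} :=
  Equiv.ofBijective (fun x => ⟨mu n k x, mu_dvd x⟩)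
    ⟨fun x y h => mu_inj (Subtype.ext_iff.mp h),
     fun z => by obtain ⟨x, hx⟩ := mu_surj z.1 z.2; exact ⟨x, Subtype.ext hx⟩⟩

lemma card_dvd' {M j : ℕ} (hj : j ≤ M) :
    Nat.card {z : ZMod (2 ^ M) // (2 : ZMod (2 ^ M)) ^ j ∣ z} = 2 ^ (M - j) := by
  obtain ⟨i, rfl⟩ : ∃ i, M = i + j := ⟨M - j, by omega⟩
  rw [← Nat.card_congr (muEquiv i j), Nat.card_zmod]
  congr 1
  omega

lemma count_even {m : ℕ} :
    Nat.card {z : ZMod (2 ^ (m + 1)) // (2 : ZMod (2 ^ (m + 1))) ∣ z} = 2 ^ m := by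
  have h := card_dvd' (M := m + 1) (j := 1) (by omega)
  rw [pow_one] at h
  exact h

lemma count_odd {m : ℕ} :
    Nat.card {z : ZMod (2 ^ (m + 1)) // ¬ (2 : ZMod (2 ^ (m + 1))) ∣ z} = 2 ^ m := by
  have key : Nat.card {z : ZMod (2 ^ (m + 1)) // (2 : ZMod (2 ^ (m + 1))) ∣ z}
      + Nat.card {z : ZMod (2 ^ (m + 1)) // ¬ (2 : ZMod (2 ^ (m + 1))) ∣ z} = 2 ^ (m + 1) := by
    classical
    rw [← Nat.card_sum, Nat.card_congr (Equiv.sumCompl (fun z : ZMod (2 ^ (m + 1)) =>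
      (2 : ZMod (2 ^ (m + 1))) ∣ z)), Nat.card_zmod]
  rw [count_even] at key
  omega

lemma card_fiber_cd (n k : ℕ) (y : ZMod (2 ^ n)) :
    Nat.card {z : ZMod (2 ^ (n + k)) // cd (n + k) n z = y} = 2 ^ k := by
  obtain ⟨z₀, hz₀⟩ := cd_surj (Nat.le_add_right n k) y
  have e : {z : ZMod (2 ^ (n + k)) // cd (n + k) n z = y}
      ≃ {w : ZMod (2 ^ (n + k)) // cd (n + k) n w = 0} :=
    { toFun := fun z => ⟨z.1 - z₀, by
        rw [cd_sub (Nat.le_add_right n k), z.2, hz₀, sub_self]⟩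
      invFun := fun w => ⟨w.1 + z₀, by
        have : cd (n + k) n (w.1 + z₀) = cd (n + k) n w.1 + cd (n + k) n z₀ :=
          cd_add (Nat.le_add_right n k) _ _
        rw [this, w.2, hz₀, zero_add]⟩
      left_inv := fun z => Subtype.ext (by simp)
      right_inv := fun w => Subtype.ext (by simp) }
  rw [Nat.card_congr e]
  have hiff : ∀ w : ZMod (2 ^ (n + k)),
      cd (n + k) n w = 0 ↔ (2 : ZMod (2 ^ (n + k))) ^ n ∣ w := by
    intro w
    rw [cd, ZMod.natCast_eq_zero_iff, dvd_iff_val_dvd (Nat.le_add_right n k)]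
  rw [card_iff _ _ hiff, card_dvd' (Nat.le_add_right n k)]
  congr 1
  omega

lemma card_fiber_prod {α β γ δ : Type*} [Finite α] [Finite β] (f : α → γ) (g : β → δ)
    (c : γ × δ) (a b : ℕ) (ha : Nat.card {x // f x = c.1} = a)
    (hb : Nat.card {x // g x = c.2} = b) :
    Nat.card {p : α × β // (f p.1, g p.2) = c} = a * b := by
  have e : {p : α × β // (f p.1, g p.2) = c} ≃ {x // f x = c.1} × {x // g x = c.2} :=
    (Equiv.subtypeEquivRight (fun p => by simp [Prod.ext_iff])).trans
      Equiv.subtypeProdEquivProd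
  rw [Nat.card_congr e, Nat.card_prod, ha, hb]

lemma isUnit_of_odd {m : ℕ} {x : ZMod (2 ^ m)} (h : ¬ (2 : ZMod (2 ^ m)) ∣ x) : IsUnit x := by
  rcases Nat.eq_zero_or_pos m with hm | hm
  · subst hm
    haveI : Subsingleton (ZMod (2 ^ 0)) := by
      rw [pow_zero]
      exact inferInstanceAs (Subsingleton (ZMod 1))
    exact absurd ⟨x, Subsingleton.elim _ _⟩ h
  · have hval : ¬ 2 ∣ x.val := by
      intro hd
      exact h (by
        have := (dvd_iff_val_dvd (j := 1) (by omega) x).mpr (by simpa using hd)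
        simpa using this)
    have hx : ((x.val : ℕ) : ZMod (2 ^ m)) = x := by rw [ZMod.natCast_val, ZMod.cast_id]
    rw [← hx]
    rw [ZMod.isUnit_iff_coprime]
    exact Nat.Coprime.pow_right _
      (Nat.coprime_comm.mp ((Nat.Prime.coprime_iff_not_dvd Nat.prime_two).mpr hval))

noncomputable def Wcard (m : ℕ) : ℕ :=
  Nat.card {p : ZMod (2 ^ m) × ZMod (2 ^ m) // ord2 m p.1 < ord2 m p.2}

lemma Wcard_zero : Wcard 0 = 0 := by
  apply card_empty_of
  intro p hp
  have := ord2_le 0 p.2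
  omega

lemma ord2_eq_zero_of_odd {m : ℕ} {x : ZMod (2 ^ m)} (h : ¬ (2 : ZMod (2 ^ m)) ∣ x) :
    ord2 m x = 0 := by
  by_contra hne
  have hpos : 0 < ord2 m x := Nat.pos_of_ne_zero hne
  have := (lt_ord2_iff.mp hpos).2
  rw [pow_one] at this
  exact h this

lemma two_dvd_of_ord2_pos {m : ℕ} {x : ZMod (2 ^ m)} (h : 0 < ord2 m x) :
    (2 : ZMod (2 ^ m)) ∣ x := by
  have := (lt_ord2_iff.mp h).2
  rwa [pow_one] at this

lemma one_le_ord2_of_even {m : ℕ} {x : ZMod (2 ^ (m + 1))}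
    (h : (2 : ZMod (2 ^ (m + 1))) ∣ x) : 1 ≤ ord2 (m + 1) x :=
  le_ord2 (by omega) (by rwa [pow_one])

lemma two_pow_mul_self (m : ℕ) : (2 : ℕ) ^ m * 2 ^ m = 4 ^ m := by
  rw [← pow_add, show (4 : ℕ) = 2 ^ 2 from rfl, ← pow_mul]
  congr 1
  omega

lemma Wcard_succ (m : ℕ) : Wcard (m + 1) = 4 ^ m + Wcard m := by
  classical
  rw [Wcard, card_split _ (fun p : ZMod (2 ^ (m + 1)) × ZMod (2 ^ (m + 1)) =>
    (2 : ZMod (2 ^ (m + 1))) ∣ p.1)]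
  have hA : Nat.card {p : ZMod (2 ^ (m + 1)) × ZMod (2 ^ (m + 1)) //
      (ord2 (m + 1) p.1 < ord2 (m + 1) p.2) ∧ (2 : ZMod (2 ^ (m + 1))) ∣ p.1} = Wcard m := by
    symm
    apply Nat.card_congr
    apply Equiv.ofBijective (fun q : {p : ZMod (2 ^ m) × ZMod (2 ^ m) //
        ord2 m p.1 < ord2 m p.2} =>
      (⟨(mu m 1 q.1.1, mu m 1 q.1.2), by
          constructor
          · rw [mu_ord, mu_ord]
            omega
          · have := mu_dvd (n := m) (k := 1) q.1.1
            rwa [pow_one] at this⟩ :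
        {p : ZMod (2 ^ (m + 1)) × ZMod (2 ^ (m + 1)) //
          (ord2 (m + 1) p.1 < ord2 (m + 1) p.2) ∧ (2 : ZMod (2 ^ (m + 1))) ∣ p.1}))
    constructor
    · rintro ⟨⟨x, y⟩, h⟩ ⟨⟨x', y'⟩, h'⟩ heq
      have h1 := congrArg (fun z => z.1.1) heq
      have h2 := congrArg (fun z => z.1.2) heq
      simp only at h1 h2
      have := mu_inj h1
      have := mu_inj h2
      apply Subtype.ext
      simp_all
    · rintro ⟨⟨x, y⟩, hc, hx⟩
      dsimp only at hc hx
      have hy : (2 : ZMod (2 ^ (m + 1))) ∣ y := by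
        apply two_dvd_of_ord2_pos
        have := one_le_ord2_of_even hx
        omega
      obtain ⟨x', hx'⟩ := mu_surj (n := m) (k := 1) x (by rwa [pow_one])
      obtain ⟨y', hy'⟩ := mu_surj (n := m) (k := 1) y (by rwa [pow_one])
      refine ⟨⟨(x', y'), ?_⟩, ?_⟩
      · dsimp only
        have e1 : ord2 (m + 1) x = 1 + ord2 m x' := by rw [← hx', mu_ord]
        have e2 : ord2 (m + 1) y = 1 + ord2 m y' := by rw [← hy', mu_ord]
        omega
      · apply Subtype.ext
        simp [hx', hy']
  have hB : Nat.card {p : ZMod (2 ^ (m + 1)) × ZMod (2 ^ (m + 1)) //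
      (ord2 (m + 1) p.1 < ord2 (m + 1) p.2) ∧ ¬ (2 : ZMod (2 ^ (m + 1))) ∣ p.1} = 4 ^ m := by
    have hiff : ∀ p : ZMod (2 ^ (m + 1)) × ZMod (2 ^ (m + 1)),
        ((ord2 (m + 1) p.1 < ord2 (m + 1) p.2) ∧ ¬ (2 : ZMod (2 ^ (m + 1))) ∣ p.1)
          ↔ (¬ (2 : ZMod (2 ^ (m + 1))) ∣ p.1 ∧ (2 : ZMod (2 ^ (m + 1))) ∣ p.2) := by
      intro p
      constructor
      · rintro ⟨hlt, hodd⟩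
        exact ⟨hodd, two_dvd_of_ord2_pos (by omega)⟩
      · rintro ⟨hodd, heven⟩
        have h0 : ord2 (m + 1) p.1 = 0 := ord2_eq_zero_of_odd hodd
        have h1 := one_le_ord2_of_even heven
        exact ⟨by omega, hodd⟩
    rw [card_iff _ _ hiff, Nat.card_congr (Equiv.subtypeProdEquivProd
      (p := fun a : ZMod (2 ^ (m + 1)) => ¬ (2 : ZMod (2 ^ (m + 1))) ∣ a)
      (q := fun b : ZMod (2 ^ (m + 1)) => (2 : ZMod (2 ^ (m + 1))) ∣ b)), Nat.card_prod,
      count_odd, count_even, two_pow_mul_self]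
  rw [hA, hB]
  omega

lemma Wcard_closed (m : ℕ) : 3 * Wcard m + 1 = 4 ^ m := by
  induction m with
  | zero => simp [Wcard_zero]
  | succ m ih =>
    rw [Wcard_succ]
    rw [pow_succ]
    omega

abbrev V (m : ℕ) := ZMod (2 ^ m) × ZMod (2 ^ m) × ZMod (2 ^ m)

noncomputable def cross {m : ℕ} (u v : V m) : V m :=
  (u.2.1 * v.2.2 - u.2.2 * v.2.1, u.2.2 * v.1 - u.1 * v.2.2, u.1 * v.2.1 - u.2.1 * v.1)

def Cond (m : ℕ) (u v : V m) : Prop :=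
  ord2 m (cross u v).2.1 < ord2 m (cross u v).1 ∧
  ord2 m (cross u v).2.1 < ord2 m (cross u v).2.2

noncomputable def Ncard (m : ℕ) : ℕ := Nat.card {p : V m × V m // Cond m p.1 p.2}

lemma unit_cancel {m : ℕ} {a : ZMod (2 ^ m)} (h : IsUnit a) (x : ZMod (2 ^ m)) :
    a * (Ring.inverse a * x) = x := by
  rw [← mul_assoc, Ring.mul_inverse_cancel a h, one_mul]

lemma inv_unit_cancel {m : ℕ} {a : ZMod (2 ^ m)} (h : IsUnit a) (x : ZMod (2 ^ m)) :
    Ring.inverse a * (a * x) = x := by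
  rw [← mul_assoc, Ring.inverse_mul_cancel a h, one_mul]

lemma cross_identity {m : ℕ} (u v : V m) :
    u.1 * (cross u v).1 + u.2.1 * (cross u v).2.1 + u.2.2 * (cross u v).2.2 = 0 := by
  simp only [cross]
  ring

lemma cond_empty_of_odd_u2 {m : ℕ} (u v : V m) (hc : Cond m u v)
    (hodd : ¬ (2 : ZMod (2 ^ m)) ∣ u.2.1) : False := by
  obtain ⟨h1, h2⟩ := hc
  obtain ⟨hsm, hd1⟩ := lt_ord2_iff.mp h1
  obtain ⟨-, hd3⟩ := lt_ord2_iff.mp h2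
  set s := ord2 m (cross u v).2.1 with hs
  have hsum : u.2.1 * (cross u v).2.1
      = -(u.1 * (cross u v).1 + u.2.2 * (cross u v).2.2) := by
    have := cross_identity u v
    linear_combination this
  have hdvd : (2 : ZMod (2 ^ m)) ^ (s + 1) ∣ u.2.1 * (cross u v).2.1 := by
    rw [hsum, dvd_neg]
    exact dvd_add (hd1.mul_left u.1) (hd3.mul_left u.2.2)
  have hu : IsUnit u.2.1 := isUnit_of_odd hodd
  have : (2 : ZMod (2 ^ m)) ^ (s + 1) ∣ (cross u v).2.1 :=
    (IsUnit.dvd_mul_left hu).mp hdvd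
  have : s < ord2 m (cross u v).2.1 := lt_ord2_iff.mpr ⟨hsm, this⟩
  omega

/-- parametrized inverse for the u₁-unit stratum -/
noncomputable def vmk1 {m : ℕ} (u : V m) (w y z : ZMod (2 ^ m)) : V m :=
  (w, (Ring.inverse u.1 * (z + u.2.1 * w), Ring.inverse u.1 * (u.2.2 * w - y)))

lemma vmk1_crossB {m : ℕ} {u : V m} (hu : IsUnit u.1) (w y z : ZMod (2 ^ m)) :
    (cross u (vmk1 u w y z)).2.1 = y := by
  simp only [cross, vmk1]
  rw [unit_cancel hu]
  ring

lemma vmk1_crossC {m : ℕ} {u : V m} (hu : IsUnit u.1) (w y z : ZMod (2 ^ m)) :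
    (cross u (vmk1 u w y z)).2.2 = z := by
  simp only [cross, vmk1]
  rw [unit_cancel hu]
  ring

lemma vmk1_crossA {m : ℕ} (u : V m) (w y z : ZMod (2 ^ m)) :
    (cross u (vmk1 u w y z)).1 = -(Ring.inverse u.1) * (u.2.1 * y + u.2.2 * z) := by
  simp only [cross, vmk1]
  ring

lemma dvd_succ_of_even_mul {m s : ℕ} {a y : ZMod (2 ^ m)}
    (ha : (2 : ZMod (2 ^ m)) ∣ a) (hy : (2 : ZMod (2 ^ m)) ^ s ∣ y) :
    (2 : ZMod (2 ^ m)) ^ (s + 1) ∣ a * y := by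
  obtain ⟨c, hc⟩ := ha
  obtain ⟨t, ht⟩ := hy
  exact ⟨c * t, by rw [hc, ht, pow_succ]; ring⟩

lemma fiber_card_u1 {m : ℕ} (u : V m) (h2 : (2 : ZMod (2 ^ m)) ∣ u.2.1)
    (h1 : ¬ (2 : ZMod (2 ^ m)) ∣ u.1) :
    Nat.card {v : V m // Cond m u v} = 2 ^ m * Wcard m := by
  have hu : IsUnit u.1 := isUnit_of_odd h1
  have e : {v : V m // Cond m u v} ≃
      ZMod (2 ^ m) × {p : ZMod (2 ^ m) × ZMod (2 ^ m) // ord2 m p.1 < ord2 m p.2} :=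
    { toFun := fun v => (v.1.1, ⟨((cross u v.1).2.1, (cross u v.1).2.2), v.2.2⟩)
      invFun := fun x => ⟨vmk1 u x.1 x.2.1.1 x.2.1.2, by
        have hyz := x.2.2
        set y := x.2.1.1
        set z := x.2.1.2
        have hym : ord2 m y < m := by
          have := ord2_le m z
          omega
        constructor
        · rw [vmk1_crossB hu, vmk1_crossA]
          apply lt_ord2_iff.mpr
          refine ⟨hym, ?_⟩
          rw [neg_mul]
          rw [dvd_neg]
          apply Dvd.dvd.mul_left
          apply dvd_add
          · exact dvd_succ_of_even_mul h2 (ord2_dvd m y)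
          · exact Dvd.dvd.mul_left (lt_ord2_iff.mp hyz).2 u.2.2
        · rw [vmk1_crossB hu, vmk1_crossC hu]
          exact hyz⟩
      left_inv := fun v => by
        apply Subtype.ext
        obtain ⟨⟨v1, v2, v3⟩, hv⟩ := v
        simp only [vmk1]
        refine Prod.ext rfl (Prod.ext ?_ ?_)
        · show Ring.inverse u.1 * ((cross u (v1, v2, v3)).2.2 + u.2.1 * v1) = v2
          have hh : (cross u (v1, v2, v3)).2.2 + u.2.1 * v1 = u.1 * v2 := by
            simp only [cross]; ring
          rw [hh, inv_unit_cancel hu]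
        · show Ring.inverse u.1 * (u.2.2 * v1 - (cross u (v1, v2, v3)).2.1) = v3
          have hh : u.2.2 * v1 - (cross u (v1, v2, v3)).2.1 = u.1 * v3 := by
            simp only [cross]; ring
          rw [hh, inv_unit_cancel hu]
      right_inv := fun x => by
        obtain ⟨w, ⟨⟨y, z⟩, hyz⟩⟩ := x
        refine Prod.ext rfl (Subtype.ext (Prod.ext ?_ ?_))
        · exact vmk1_crossB hu w y z
        · exact vmk1_crossC hu w y z }
  rw [Nat.card_congr e, Nat.card_prod, Nat.card_zmod, Wcard]

/-- parametrized inverse for the u₃-unit stratum -/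
noncomputable def vmk3 {m : ℕ} (u : V m) (w y z : ZMod (2 ^ m)) : V m :=
  (Ring.inverse u.2.2 * (y + u.1 * w), (Ring.inverse u.2.2 * (u.2.1 * w - z), w))

lemma vmk3_crossA {m : ℕ} {u : V m} (hu : IsUnit u.2.2) (w y z : ZMod (2 ^ m)) :
    (cross u (vmk3 u w y z)).1 = z := by
  simp only [cross, vmk3]
  rw [unit_cancel hu]
  ring

lemma vmk3_crossB {m : ℕ} {u : V m} (hu : IsUnit u.2.2) (w y z : ZMod (2 ^ m)) :
    (cross u (vmk3 u w y z)).2.1 = y := by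
  simp only [cross, vmk3]
  rw [unit_cancel hu]
  ring

lemma vmk3_crossC {m : ℕ} (u : V m) (w y z : ZMod (2 ^ m)) :
    (cross u (vmk3 u w y z)).2.2 = -(Ring.inverse u.2.2) * (u.2.1 * y + u.1 * z) := by
  simp only [cross, vmk3]
  ring

lemma fiber_card_u3 {m : ℕ} (u : V m) (h2 : (2 : ZMod (2 ^ m)) ∣ u.2.1)
    (h3 : ¬ (2 : ZMod (2 ^ m)) ∣ u.2.2) :
    Nat.card {v : V m // Cond m u v} = 2 ^ m * Wcard m := by
  have hu : IsUnit u.2.2 := isUnit_of_odd h3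
  have e : {v : V m // Cond m u v} ≃
      ZMod (2 ^ m) × {p : ZMod (2 ^ m) × ZMod (2 ^ m) // ord2 m p.1 < ord2 m p.2} :=
    { toFun := fun v => (v.1.2.2, ⟨((cross u v.1).2.1, (cross u v.1).1), v.2.1⟩)
      invFun := fun x => ⟨vmk3 u x.1 x.2.1.1 x.2.1.2, by
        have hyz := x.2.2
        set y := x.2.1.1
        set z := x.2.1.2
        have hym : ord2 m y < m := by
          have := ord2_le m z
          omega
        constructor
        · rw [vmk3_crossB hu, vmk3_crossA hu]
          exact hyz
        · rw [vmk3_crossB hu, vmk3_crossC]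
          apply lt_ord2_iff.mpr
          refine ⟨hym, ?_⟩
          rw [neg_mul, dvd_neg]
          apply Dvd.dvd.mul_left
          apply dvd_add
          · exact dvd_succ_of_even_mul h2 (ord2_dvd m y)
          · exact Dvd.dvd.mul_left (lt_ord2_iff.mp hyz).2 u.1⟩
      left_inv := fun v => by
        apply Subtype.ext
        obtain ⟨⟨v1, v2, v3⟩, hv⟩ := v
        simp only [vmk3]
        refine Prod.ext ?_ (Prod.ext ?_ rfl)
        · show Ring.inverse u.2.2 * ((cross u (v1, v2, v3)).2.1 + u.1 * v3) = v1
          have hh : (cross u (v1, v2, v3)).2.1 + u.1 * v3 = u.2.2 * v1 := by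
            simp only [cross]; ring
          rw [hh, inv_unit_cancel hu]
        · show Ring.inverse u.2.2 * (u.2.1 * v3 - (cross u (v1, v2, v3)).1) = v2
          have hh : u.2.1 * v3 - (cross u (v1, v2, v3)).1 = u.2.2 * v2 := by
            simp only [cross]; ring
          rw [hh, inv_unit_cancel hu]
      right_inv := fun x => by
        obtain ⟨w, ⟨⟨y, z⟩, hyz⟩⟩ := x
        refine Prod.ext rfl (Subtype.ext (Prod.ext ?_ ?_))
        · exact vmk3_crossB hu w y z
        · exact vmk3_crossA hu w y z }
  rw [Nat.card_congr e, Nat.card_prod, Nat.card_zmod, Wcard]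

lemma card_fiber_id {α : Type*} (a : α) : Nat.card {x : α // x = a} = 1 := by
  haveI : Unique {x : α // x = a} := ⟨⟨⟨a, rfl⟩⟩, by rintro ⟨x, rfl⟩; rfl⟩
  exact Nat.card_unique

noncomputable def muV (m : ℕ) (u : V m) : V (m + 1) :=
  (mu m 1 u.1, mu m 1 u.2.1, mu m 1 u.2.2)

noncomputable def cdV (m : ℕ) (v : V (m + 1)) : V m :=
  (cd (m + 1) m v.1, cd (m + 1) m v.2.1, cd (m + 1) m v.2.2)

lemma card_fiber_cdV (m : ℕ) (y : V m) :
    Nat.card {v : V (m + 1) // cdV m v = y} = 8 := by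
  have h1 : Nat.card {z : ZMod (2 ^ (m + 1)) // cd (m + 1) m z = y.1} = 2 := by
    have := card_fiber_cd m 1 y.1
    rwa [pow_one] at this
  have h21 : Nat.card {z : ZMod (2 ^ (m + 1)) // cd (m + 1) m z = y.2.1} = 2 := by
    have := card_fiber_cd m 1 y.2.1
    rwa [pow_one] at this
  have h22 : Nat.card {z : ZMod (2 ^ (m + 1)) // cd (m + 1) m z = y.2.2} = 2 := by
    have := card_fiber_cd m 1 y.2.2
    rwa [pow_one] at this
  have hinner : Nat.card {q : ZMod (2 ^ (m + 1)) × ZMod (2 ^ (m + 1)) //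
      (cd (m + 1) m q.1, cd (m + 1) m q.2) = y.2} = 4 :=
    card_fiber_prod _ _ y.2 2 2 h21 h22
  have := card_fiber_prod (cd (m + 1) m)
    (fun q : ZMod (2 ^ (m + 1)) × ZMod (2 ^ (m + 1)) => (cd (m + 1) m q.1, cd (m + 1) m q.2))
    y 2 4 h1 hinner
  exact this

lemma cross_muV {m : ℕ} (u : V m) (v : V (m + 1)) :
    cross (muV m u) v = muV m (cross u (cdV m v)) := by
  refine Prod.ext ?_ (Prod.ext ?_ ?_)
  · show mu m 1 u.2.1 * v.2.2 - mu m 1 u.2.2 * v.2.1 = _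
    rw [mu_mul_cd, mu_mul_cd, ← mu_sub]
    rfl
  · show mu m 1 u.2.2 * v.1 - mu m 1 u.1 * v.2.2 = _
    rw [mu_mul_cd, mu_mul_cd, ← mu_sub]
    rfl
  · show mu m 1 u.1 * v.2.1 - mu m 1 u.2.1 * v.1 = _
    rw [mu_mul_cd, mu_mul_cd, ← mu_sub]
    rfl

lemma cond_muV_iff {m : ℕ} (u : V m) (v : V (m + 1)) :
    Cond (m + 1) (muV m u) v ↔ Cond m u (cdV m v) := by
  unfold Cond
  rw [cross_muV]
  have e1 : ord2 (m + 1) (muV m (cross u (cdV m v))).1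
      = 1 + ord2 m (cross u (cdV m v)).1 := mu_ord _
  have e2 : ord2 (m + 1) (muV m (cross u (cdV m v))).2.1
      = 1 + ord2 m (cross u (cdV m v)).2.1 := mu_ord _
  have e3 : ord2 (m + 1) (muV m (cross u (cdV m v))).2.2
      = 1 + ord2 m (cross u (cdV m v)).2.2 := mu_ord _
  rw [e1, e2, e3]
  omega

lemma card_all_even (m : ℕ) :
    Nat.card {p : V (m + 1) × V (m + 1) //
      ((2 : ZMod (2 ^ (m + 1))) ∣ p.1.1 ∧ (2 : ZMod (2 ^ (m + 1))) ∣ p.1.2.1 ∧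
        (2 : ZMod (2 ^ (m + 1))) ∣ p.1.2.2) ∧ Cond (m + 1) p.1 p.2} = 8 * Ncard m := by
  have two_dvd_mu : ∀ x : ZMod (2 ^ m), (2 : ZMod (2 ^ (m + 1))) ∣ mu m 1 x := by
    intro x
    have := mu_dvd (n := m) (k := 1) x
    rwa [pow_one] at this
  have E : {q : V m × V (m + 1) // Cond (m + 1) (muV m q.1) q.2} ≃
      {p : V (m + 1) × V (m + 1) //
        ((2 : ZMod (2 ^ (m + 1))) ∣ p.1.1 ∧ (2 : ZMod (2 ^ (m + 1))) ∣ p.1.2.1 ∧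
          (2 : ZMod (2 ^ (m + 1))) ∣ p.1.2.2) ∧ Cond (m + 1) p.1 p.2} := by
    apply Equiv.ofBijective (fun q => ⟨(muV m q.1.1, q.1.2),
      ⟨⟨two_dvd_mu _, two_dvd_mu _, two_dvd_mu _⟩, q.2⟩⟩)
    constructor
    · rintro ⟨⟨u, v⟩, h⟩ ⟨⟨u', v'⟩, h'⟩ heq
      have h1 := congrArg (fun z => z.1.1) heq
      have h2 := congrArg (fun z => z.1.2) heq
      simp only [muV] at h1 h2
      apply Subtype.ext
      have hu : u = u' := by
        have e1 := congrArg (fun z : V (m + 1) => z.1) h1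
        have e2 := congrArg (fun z : V (m + 1) => z.2.1) h1
        have e3 := congrArg (fun z : V (m + 1) => z.2.2) h1
        simp only at e1 e2 e3
        exact Prod.ext (mu_inj e1) (Prod.ext (mu_inj e2) (mu_inj e3))
      simp_all
    · rintro ⟨⟨u, v⟩, ⟨⟨ha, hb, hc⟩, hcond⟩⟩
      obtain ⟨a', ha'⟩ := mu_surj (n := m) (k := 1) u.1 (by rwa [pow_one])
      obtain ⟨b', hb'⟩ := mu_surj (n := m) (k := 1) u.2.1 (by rwa [pow_one])
      obtain ⟨c', hc'⟩ := mu_surj (n := m) (k := 1) u.2.2 (by rwa [pow_one])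
      have hu : muV m (a', b', c') = u := by
        rw [muV]
        exact Prod.ext ha' (Prod.ext hb' hc')
      refine ⟨⟨((a', b', c'), v), by rw [hu]; exact hcond⟩, ?_⟩
      apply Subtype.ext
      show (muV m (a', b', c'), v) = (u, v)
      rw [hu]
  rw [← Nat.card_congr E, card_iff _ (fun q : V m × V (m + 1) => Cond m q.1 (cdV m q.2))
    (fun q => cond_muV_iff q.1 q.2)]
  exact card_comap (fun q : V m × V (m + 1) => (q.1, cdV m q.2))
    (fun r : V m × V m => Cond m r.1 r.2) 8
    (fun r => card_fiber_prod (fun x : V m => x) (cdV m) r 1 8 (card_fiber_id r.1)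
      (card_fiber_cdV m r.2))

lemma count_uA (m : ℕ) :
    Nat.card {u : V (m + 1) // (2 : ZMod (2 ^ (m + 1))) ∣ u.2.1 ∧
      ¬ (2 : ZMod (2 ^ (m + 1))) ∣ u.1} = 2 ^ (3 * m + 1) := by
  have e1 : {u : V (m + 1) // (2 : ZMod (2 ^ (m + 1))) ∣ u.2.1 ∧
      ¬ (2 : ZMod (2 ^ (m + 1))) ∣ u.1}
      ≃ {a : ZMod (2 ^ (m + 1)) // ¬ (2 : ZMod (2 ^ (m + 1))) ∣ a} ×
        {bc : ZMod (2 ^ (m + 1)) × ZMod (2 ^ (m + 1)) // (2 : ZMod (2 ^ (m + 1))) ∣ bc.1} :=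
    (Equiv.subtypeEquivRight (fun u => by tauto)).trans
      (Equiv.subtypeProdEquivProd
        (p := fun a : ZMod (2 ^ (m + 1)) => ¬ (2 : ZMod (2 ^ (m + 1))) ∣ a)
        (q := fun bc : ZMod (2 ^ (m + 1)) × ZMod (2 ^ (m + 1)) =>
          (2 : ZMod (2 ^ (m + 1))) ∣ bc.1))
  have e2 : {bc : ZMod (2 ^ (m + 1)) × ZMod (2 ^ (m + 1)) //
      (2 : ZMod (2 ^ (m + 1))) ∣ bc.1}
      ≃ {b : ZMod (2 ^ (m + 1)) // (2 : ZMod (2 ^ (m + 1))) ∣ b} ×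
        {c : ZMod (2 ^ (m + 1)) // True} :=
    (Equiv.subtypeEquivRight (fun bc => by tauto)).trans
      (Equiv.subtypeProdEquivProd
        (p := fun b : ZMod (2 ^ (m + 1)) => (2 : ZMod (2 ^ (m + 1))) ∣ b)
        (q := fun _ : ZMod (2 ^ (m + 1)) => True))
  rw [Nat.card_congr e1, Nat.card_prod, Nat.card_congr e2, Nat.card_prod, count_odd,
    count_even, Nat.card_congr (Equiv.subtypeUnivEquiv (fun _ => trivial)), Nat.card_zmod,
    ← pow_add, ← pow_add]
  congr 1
  omega

lemma count_uB (m : ℕ) :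
    Nat.card {u : V (m + 1) // (2 : ZMod (2 ^ (m + 1))) ∣ u.2.1 ∧
      (2 : ZMod (2 ^ (m + 1))) ∣ u.1 ∧ ¬ (2 : ZMod (2 ^ (m + 1))) ∣ u.2.2} = 2 ^ (3 * m) := by
  have e1 : {u : V (m + 1) // (2 : ZMod (2 ^ (m + 1))) ∣ u.2.1 ∧
      (2 : ZMod (2 ^ (m + 1))) ∣ u.1 ∧ ¬ (2 : ZMod (2 ^ (m + 1))) ∣ u.2.2}
      ≃ {a : ZMod (2 ^ (m + 1)) // (2 : ZMod (2 ^ (m + 1))) ∣ a} ×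
        {bc : ZMod (2 ^ (m + 1)) × ZMod (2 ^ (m + 1)) //
          (2 : ZMod (2 ^ (m + 1))) ∣ bc.1 ∧ ¬ (2 : ZMod (2 ^ (m + 1))) ∣ bc.2} :=
    (Equiv.subtypeEquivRight (fun u => by tauto)).trans
      (Equiv.subtypeProdEquivProd
        (p := fun a : ZMod (2 ^ (m + 1)) => (2 : ZMod (2 ^ (m + 1))) ∣ a)
        (q := fun bc : ZMod (2 ^ (m + 1)) × ZMod (2 ^ (m + 1)) =>
          (2 : ZMod (2 ^ (m + 1))) ∣ bc.1 ∧ ¬ (2 : ZMod (2 ^ (m + 1))) ∣ bc.2))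
  have e2 : {bc : ZMod (2 ^ (m + 1)) × ZMod (2 ^ (m + 1)) //
      (2 : ZMod (2 ^ (m + 1))) ∣ bc.1 ∧ ¬ (2 : ZMod (2 ^ (m + 1))) ∣ bc.2}
      ≃ {b : ZMod (2 ^ (m + 1)) // (2 : ZMod (2 ^ (m + 1))) ∣ b} ×
        {c : ZMod (2 ^ (m + 1)) // ¬ (2 : ZMod (2 ^ (m + 1))) ∣ c} :=
    Equiv.subtypeProdEquivProd
      (p := fun b : ZMod (2 ^ (m + 1)) => (2 : ZMod (2 ^ (m + 1))) ∣ b)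
      (q := fun c : ZMod (2 ^ (m + 1)) => ¬ (2 : ZMod (2 ^ (m + 1))) ∣ c)
  rw [Nat.card_congr e1, Nat.card_prod, Nat.card_congr e2, Nat.card_prod, count_odd,
    count_even]
  simp only [← pow_add]
  congr 1
  omega

lemma Ncard_zero : Ncard 0 = 0 := by
  apply card_empty_of
  intro p hp
  have h1 := hp.1
  have := ord2_le 0 (cross p.1 p.2).1
  omega

lemma Ncard_succ (m : ℕ) :
    Ncard (m + 1) = 8 * Ncard m + 3 * 2 ^ (4 * m + 1) * Wcard (m + 1) := by
  classical
  have W := Wcard (m + 1)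
  rw [Ncard, card_split _ (fun p : V (m + 1) × V (m + 1) =>
    (2 : ZMod (2 ^ (m + 1))) ∣ p.1.2.1)]
  have hz : Nat.card {p : V (m + 1) × V (m + 1) //
      (Cond (m + 1) p.1 p.2) ∧ ¬ (2 : ZMod (2 ^ (m + 1))) ∣ p.1.2.1} = 0 :=
    card_empty_of _ (fun p hp => cond_empty_of_odd_u2 p.1 p.2 hp.1 hp.2)
  rw [hz, Nat.add_zero]
  rw [card_split (fun p : V (m + 1) × V (m + 1) =>
      Cond (m + 1) p.1 p.2 ∧ (2 : ZMod (2 ^ (m + 1))) ∣ p.1.2.1)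
    (fun p => (2 : ZMod (2 ^ (m + 1))) ∣ p.1.1)]
  have hI : Nat.card {p : V (m + 1) × V (m + 1) //
      (Cond (m + 1) p.1 p.2 ∧ (2 : ZMod (2 ^ (m + 1))) ∣ p.1.2.1) ∧
        ¬ (2 : ZMod (2 ^ (m + 1))) ∣ p.1.1}
      = 2 ^ (3 * m + 1) * (2 ^ (m + 1) * Wcard (m + 1)) := by
    rw [card_iff _ (fun p : V (m + 1) × V (m + 1) =>
      ((2 : ZMod (2 ^ (m + 1))) ∣ p.1.2.1 ∧ ¬ (2 : ZMod (2 ^ (m + 1))) ∣ p.1.1) ∧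
        Cond (m + 1) p.1 p.2) (fun p => by tauto)]
    rw [card_prod_fiber (fun u : V (m + 1) => (2 : ZMod (2 ^ (m + 1))) ∣ u.2.1 ∧
        ¬ (2 : ZMod (2 ^ (m + 1))) ∣ u.1)
      (fun (u : V (m + 1)) (v : V (m + 1)) => Cond (m + 1) u v)
      (2 ^ (m + 1) * Wcard (m + 1))
      (fun u hu => fiber_card_u1 u hu.1 hu.2), count_uA]
  rw [hI]
  rw [card_split (fun p : V (m + 1) × V (m + 1) =>
      (Cond (m + 1) p.1 p.2 ∧ (2 : ZMod (2 ^ (m + 1))) ∣ p.1.2.1) ∧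
        (2 : ZMod (2 ^ (m + 1))) ∣ p.1.1)
    (fun p => (2 : ZMod (2 ^ (m + 1))) ∣ p.1.2.2)]
  have hIIa : Nat.card {p : V (m + 1) × V (m + 1) //
      ((Cond (m + 1) p.1 p.2 ∧ (2 : ZMod (2 ^ (m + 1))) ∣ p.1.2.1) ∧
        (2 : ZMod (2 ^ (m + 1))) ∣ p.1.1) ∧ ¬ (2 : ZMod (2 ^ (m + 1))) ∣ p.1.2.2}
      = 2 ^ (3 * m) * (2 ^ (m + 1) * Wcard (m + 1)) := by
    rw [card_iff _ (fun p : V (m + 1) × V (m + 1) =>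
      ((2 : ZMod (2 ^ (m + 1))) ∣ p.1.2.1 ∧ (2 : ZMod (2 ^ (m + 1))) ∣ p.1.1 ∧
        ¬ (2 : ZMod (2 ^ (m + 1))) ∣ p.1.2.2) ∧ Cond (m + 1) p.1 p.2) (fun p => by tauto)]
    rw [card_prod_fiber (fun u : V (m + 1) => (2 : ZMod (2 ^ (m + 1))) ∣ u.2.1 ∧
        (2 : ZMod (2 ^ (m + 1))) ∣ u.1 ∧ ¬ (2 : ZMod (2 ^ (m + 1))) ∣ u.2.2)
      (fun (u : V (m + 1)) (v : V (m + 1)) => Cond (m + 1) u v)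
      (2 ^ (m + 1) * Wcard (m + 1))
      (fun u hu => fiber_card_u3 u hu.1 hu.2.2), count_uB]
  have hIIb : Nat.card {p : V (m + 1) × V (m + 1) //
      ((Cond (m + 1) p.1 p.2 ∧ (2 : ZMod (2 ^ (m + 1))) ∣ p.1.2.1) ∧
        (2 : ZMod (2 ^ (m + 1))) ∣ p.1.1) ∧ (2 : ZMod (2 ^ (m + 1))) ∣ p.1.2.2}
      = 8 * Ncard m := by
    rw [card_iff _ (fun p : V (m + 1) × V (m + 1) =>
      ((2 : ZMod (2 ^ (m + 1))) ∣ p.1.1 ∧ (2 : ZMod (2 ^ (m + 1))) ∣ p.1.2.1 ∧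
        (2 : ZMod (2 ^ (m + 1))) ∣ p.1.2.2) ∧ Cond (m + 1) p.1 p.2) (fun p => by tauto)]
    exact card_all_even m
  rw [hIIa, hIIb]
  have harith : 8 * Ncard m + 2 ^ (3 * m) * (2 ^ (m + 1) * Wcard (m + 1))
      + 2 ^ (3 * m + 1) * (2 ^ (m + 1) * Wcard (m + 1))
      = 8 * Ncard m + 3 * 2 ^ (4 * m + 1) * Wcard (m + 1) := by
    have h1 : (2 : ℕ) ^ (3 * m) * 2 ^ (m + 1) = 2 ^ (4 * m + 1) := by
      rw [← pow_add]; congr 1; omega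
    have h2 : (2 : ℕ) ^ (3 * m + 1) * 2 ^ (m + 1) = 2 ^ (4 * m + 1) * 2 := by
      rw [← pow_add, ← pow_succ]; congr 1; omega
    rw [← mul_assoc, ← mul_assoc, h1, h2]
    ring
  omega

lemma Ncard_closed (m : ℕ) :
    (28 * Ncard m : ℤ) = 4 * 64 ^ m - 7 * 16 ^ m + 3 * 8 ^ m := by
  induction m with
  | zero => simp [Ncard_zero]
  | succ m ih =>
    have hW : (3 * Wcard (m + 1) : ℤ) = 4 ^ (m + 1) - 1 := by
      have h := Wcard_closed (m + 1)
      have h' : (3 * Wcard (m + 1) + 1 : ℤ) = 4 ^ (m + 1) := by exact_mod_cast h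
      linarith
    have hrec : (Ncard (m + 1) : ℤ)
        = 8 * Ncard m + 3 * 2 ^ (4 * m + 1) * Wcard (m + 1) := by
      exact_mod_cast congrArg (Nat.cast : ℕ → ℤ) (Ncard_succ m)
    have h16 : (2 : ℤ) ^ (4 * m + 1) = 2 * 16 ^ m := by
      rw [show (16 : ℤ) = 2 ^ 4 from by norm_num, ← pow_mul, pow_succ]
      ring
    have h64 : (64 : ℤ) ^ m = 16 ^ m * 4 ^ m := by
      rw [← mul_pow]; norm_num
    calc (28 * Ncard (m + 1) : ℤ)
        = 28 * (8 * Ncard m + 3 * 2 ^ (4 * m + 1) * Wcard (m + 1)) := by rw [hrec]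
      _ = 8 * (28 * Ncard m) + 28 * 2 ^ (4 * m + 1) * (3 * Wcard (m + 1)) := by ring
      _ = 8 * (4 * 64 ^ m - 7 * 16 ^ m + 3 * 8 ^ m) + 28 * (2 * 16 ^ m) * (4 ^ (m + 1) - 1) := by
          rw [ih, hW, h16]
          try ring
      _ = 4 * 64 ^ (m + 1) - 7 * 16 ^ (m + 1) + 3 * 8 ^ (m + 1) := by
          rw [pow_succ, pow_succ, pow_succ, h64]
          try ring

noncomputable def mu3V (n : ℕ) (u : V (n + 3)) : V (n + 6) :=
  (mu (n + 3) 3 u.1, mu (n + 3) 3 u.2.1, mu (n + 3) 3 u.2.2)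

noncomputable def cd3V (n : ℕ) (u : V (n + 3)) : V n :=
  (cd (n + 3) n u.1, cd (n + 3) n u.2.1, cd (n + 3) n u.2.2)

noncomputable def mu6V (n : ℕ) (u : V n) : V (n + 6) :=
  (mu n 6 u.1, mu n 6 u.2.1, mu n 6 u.2.2)

lemma mu3_mul (n : ℕ) (a b : ZMod (2 ^ (n + 3))) :
    mu (n + 3) 3 a * mu (n + 3) 3 b = mu n 6 (cd (n + 3) n a * cd (n + 3) n b) := by
  have hL : mu (n + 3) 3 a * mu (n + 3) 3 b
      = ((2 ^ 6 * ((a.val % 2 ^ n) * b.val) : ℕ) : ZMod (2 ^ (n + 6))) := by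
    rw [mu, mu]
    rw [← Nat.cast_mul]
    rw [show (2 ^ 3 * a.val) * (2 ^ 3 * b.val) = 2 ^ 6 * (a.val * b.val) from by ring]
    rw [show (2:ℕ) ^ 6 * ((a.val % 2 ^ n) * b.val) = 2 ^ 6 * (b.val * (a.val % 2 ^ n)) from by
      ring]
    rw [cast_pow_mul_mod (n := n) (k := 6) b.val a.val]
    rw [show (2:ℕ) ^ 6 * (b.val * a.val) = 2 ^ 6 * (a.val * b.val) from by ring]
  rw [hL, mu, ZMod.val_mul, cd, cd, ZMod.val_natCast, ZMod.val_natCast]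
  have h1 := cast_pow_mul_mod (n := n) (k := 6) 1 ((a.val % 2 ^ n) * (b.val % 2 ^ n))
  rw [one_mul, one_mul] at h1
  rw [h1, cast_pow_mul_mod (n := n) (k := 6) (a.val % 2 ^ n) b.val]

lemma cross_mu3V (n : ℕ) (u v : V (n + 3)) :
    cross (mu3V n u) (mu3V n v) = mu6V n (cross (cd3V n u) (cd3V n v)) := by
  refine Prod.ext ?_ (Prod.ext ?_ ?_)
  · show mu (n + 3) 3 u.2.1 * mu (n + 3) 3 v.2.2 - mu (n + 3) 3 u.2.2 * mu (n + 3) 3 v.2.1 = _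
    rw [mu3_mul, mu3_mul, ← mu_sub]
    rfl
  · show mu (n + 3) 3 u.2.2 * mu (n + 3) 3 v.1 - mu (n + 3) 3 u.1 * mu (n + 3) 3 v.2.2 = _
    rw [mu3_mul, mu3_mul, ← mu_sub]
    rfl
  · show mu (n + 3) 3 u.1 * mu (n + 3) 3 v.2.1 - mu (n + 3) 3 u.2.1 * mu (n + 3) 3 v.1 = _
    rw [mu3_mul, mu3_mul, ← mu_sub]
    rfl

lemma cond_mu3V_iff (n : ℕ) (u v : V (n + 3)) :
    Cond (n + 6) (mu3V n u) (mu3V n v) ↔ Cond n (cd3V n u) (cd3V n v) := by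
  unfold Cond
  rw [cross_mu3V]
  have e1 : ord2 (n + 6) (mu6V n (cross (cd3V n u) (cd3V n v))).1
      = 6 + ord2 n (cross (cd3V n u) (cd3V n v)).1 := mu_ord _
  have e2 : ord2 (n + 6) (mu6V n (cross (cd3V n u) (cd3V n v))).2.1
      = 6 + ord2 n (cross (cd3V n u) (cd3V n v)).2.1 := mu_ord _
  have e3 : ord2 (n + 6) (mu6V n (cross (cd3V n u) (cd3V n v))).2.2
      = 6 + ord2 n (cross (cd3V n u) (cd3V n v)).2.2 := mu_ord _
  rw [e1, e2, e3]
  omega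

lemma card_fiber_cd3V (n : ℕ) (y : V n) :
    Nat.card {u : V (n + 3) // cd3V n u = y} = 512 := by
  have h1 := card_fiber_cd n 3 y.1
  have h21 := card_fiber_cd n 3 y.2.1
  have h22 := card_fiber_cd n 3 y.2.2
  have hinner : Nat.card {q : ZMod (2 ^ (n + 3)) × ZMod (2 ^ (n + 3)) //
      (cd (n + 3) n q.1, cd (n + 3) n q.2) = y.2} = 64 :=
    card_fiber_prod _ _ y.2 (2 ^ 3) (2 ^ 3) h21 h22
  have := card_fiber_prod (cd (n + 3) n)
    (fun q : ZMod (2 ^ (n + 3)) × ZMod (2 ^ (n + 3)) => (cd (n + 3) n q.1, cd (n + 3) n q.2))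
    y (2 ^ 3) 64 h1 hinner
  exact this

/-- the inner-count reduction -/
lemma card_inner (n : ℕ) :
    Nat.card {q : V (n + 3) × V (n + 3) // Cond (n + 6) (mu3V n q.1) (mu3V n q.2)}
      = 2 ^ 18 * Ncard n := by
  rw [card_iff _ (fun q : V (n + 3) × V (n + 3) => Cond n (cd3V n q.1) (cd3V n q.2))
    (fun q => cond_mu3V_iff n q.1 q.2)]
  have := card_comap (fun q : V (n + 3) × V (n + 3) => (cd3V n q.1, cd3V n q.2))
    (fun r : V n × V n => Cond n r.1 r.2) (2 ^ 18)
    (fun r => by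
      have := card_fiber_prod (cd3V n) (cd3V n) r 512 512
        (card_fiber_cd3V n r.1) (card_fiber_cd3V n r.2)
      rw [this]
      norm_num)
  exact this


noncomputable def mkM (n : ℕ) (p : V (n + 6) × V (n + 6)) :
    Matrix (Fin 3) (Fin 3) (ZMod (2 ^ (n + 6))) :=
  Matrix.of ![![p.1.1, p.2.1, 0], ![p.1.2.1, p.2.2.1, 0], ![p.1.2.2, p.2.2.2, 0]]

lemma cross_eq_ABC (n : ℕ) (M : Matrix (Fin 3) (Fin 3) (ZMod (2 ^ (n + 6)))) :
    cross ((M 0 0, M 1 0, M 2 0) : V (n + 6)) ((M 0 1, M 1 1, M 2 1) : V (n + 6))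
      = (Af M, (- Bf M, Cf M)) := by
  refine Prod.ext ?_ (Prod.ext ?_ ?_)
  · show M 1 0 * M 2 1 - M 2 0 * M 1 1 = Af M
    rw [Af]; ring
  · show M 2 0 * M 0 1 - M 0 0 * M 2 1 = - Bf M
    rw [Bf]; ring
  · show M 0 0 * M 1 1 - M 1 0 * M 0 1 = Cf M
    rw [Cf]; ring

lemma hmod8 (n : ℕ) (x : ZMod (2 ^ (n + 6))) :
    ((x.val : ZMod (2 ^ 3)) = 0) ↔ (2 : ZMod (2 ^ (n + 6))) ^ 3 ∣ x := by
  rw [ZMod.natCast_eq_zero_iff, dvd_iff_val_dvd (by omega)]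

def dvd8 (n : ℕ) (p : V (n + 6) × V (n + 6)) : Prop :=
  (2 : ZMod (2 ^ (n + 6))) ^ 3 ∣ p.1.1 ∧ (2 : ZMod (2 ^ (n + 6))) ^ 3 ∣ p.1.2.1 ∧
  (2 : ZMod (2 ^ (n + 6))) ^ 3 ∣ p.1.2.2 ∧ (2 : ZMod (2 ^ (n + 6))) ^ 3 ∣ p.2.1 ∧
  (2 : ZMod (2 ^ (n + 6))) ^ 3 ∣ p.2.2.1 ∧ (2 : ZMod (2 ^ (n + 6))) ^ 3 ∣ p.2.2.2

lemma eta_eq (n : ℕ) :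
    eta 3 (n + 6) (0 : Matrix (Fin 3) (Fin 3) (ZMod (2 ^ 3))) = 2 ^ 18 * Ncard n := by
  rw [eta]
  have eA : {M : Matrix (Fin 3) (Fin 3) (ZMod (2 ^ (n + 6))) //
      (∀ i, M i 2 = 0) ∧
      (∀ i j, (((M i j).val : ZMod (2 ^ 3))) = (0 : Matrix (Fin 3) (Fin 3) (ZMod (2 ^ 3))) i j) ∧
      ord2 (n + 6) (Bf M) < ord2 (n + 6) (Af M) ∧
        ord2 (n + 6) (Bf M) < ord2 (n + 6) (Cf M)}
      ≃ {p : V (n + 6) × V (n + 6) // dvd8 n p ∧ Cond (n + 6) p.1 p.2} :=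
    { toFun := fun M => ⟨((M.1 0 0, M.1 1 0, M.1 2 0), (M.1 0 1, M.1 1 1, M.1 2 1)), by
        obtain ⟨M, h1, h2, h3, h4⟩ := M
        have hm : ∀ i j, (2 : ZMod (2 ^ (n + 6))) ^ 3 ∣ M i j := by
          intro i j
          apply (hmod8 n _).mp
          have := h2 i j
          simpa using this
        refine ⟨⟨hm 0 0, hm 1 0, hm 2 0, hm 0 1, hm 1 1, hm 2 1⟩, ?_⟩
        unfold Cond
        rw [cross_eq_ABC n M]
        exact ⟨by rw [ord2_neg]; exact h3, by rw [ord2_neg]; exact h4⟩⟩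
      invFun := fun pp => ⟨mkM n pp.1, by
        obtain ⟨p, hd, hc⟩ := pp
        dsimp only
        have hzero : ((0 : ZMod (2 ^ (n + 6))).val : ZMod (2 ^ 3)) = 0 := by
          rw [ZMod.val_zero]; exact Nat.cast_zero
        have hh := cross_eq_ABC n (mkM n p)
        have hcols1 : ((mkM n p) 0 0, (mkM n p) 1 0, (mkM n p) 2 0) = p.1 := rfl
        have hcols2 : ((mkM n p) 0 1, (mkM n p) 1 1, (mkM n p) 2 1) = p.2 := rfl
        rw [hcols1, hcols2] at hh
        refine ⟨?_, ?_, ?_, ?_⟩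
        · intro i; fin_cases i <;> rfl
        · intro i j
          rw [Matrix.zero_apply]
          fin_cases i <;> fin_cases j
          · exact (hmod8 n _).mpr hd.1
          · exact (hmod8 n _).mpr hd.2.2.2.1
          · exact hzero
          · exact (hmod8 n _).mpr hd.2.1
          · exact (hmod8 n _).mpr hd.2.2.2.2.1
          · exact hzero
          · exact (hmod8 n _).mpr hd.2.2.1
          · exact (hmod8 n _).mpr hd.2.2.2.2.2
          · exact hzero
        · have h := hc.1
          rw [hh] at h
          dsimp only at h
          rw [ord2_neg] at h
          exact h
        · have h := hc.2
          rw [hh] at h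
          dsimp only at h
          rw [ord2_neg] at h
          exact h⟩
      left_inv := fun M => by
        apply Subtype.ext
        obtain ⟨M, h1, h2, h3, h4⟩ := M
        ext i j
        fin_cases i <;> fin_cases j <;> first | rfl | exact (h1 _).symm
      right_inv := fun p => by
        apply Subtype.ext
        rfl }
  rw [Nat.card_congr eA]
  have two_pow3_dvd_mu : ∀ x : ZMod (2 ^ (n + 3)),
      (2 : ZMod (2 ^ (n + 6))) ^ 3 ∣ mu (n + 3) 3 x := fun x => mu_dvd x
  have eB : {q : V (n + 3) × V (n + 3) // Cond (n + 6) (mu3V n q.1) (mu3V n q.2)}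
      ≃ {p : V (n + 6) × V (n + 6) // dvd8 n p ∧ Cond (n + 6) p.1 p.2} := by
    apply Equiv.ofBijective (fun q => ⟨(mu3V n q.1.1, mu3V n q.1.2),
      ⟨⟨two_pow3_dvd_mu _, two_pow3_dvd_mu _, two_pow3_dvd_mu _, two_pow3_dvd_mu _,
        two_pow3_dvd_mu _, two_pow3_dvd_mu _⟩, q.2⟩⟩)
    constructor
    · rintro ⟨⟨u, v⟩, h⟩ ⟨⟨u', v'⟩, h'⟩ heq
      have h1 := congrArg (fun z => z.1.1) heq
      have h2 := congrArg (fun z => z.1.2) heq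
      simp only [mu3V] at h1 h2
      apply Subtype.ext
      have hu : u = u' := by
        have e1 := congrArg (fun z : V (n + 6) => z.1) h1
        have e2 := congrArg (fun z : V (n + 6) => z.2.1) h1
        have e3 := congrArg (fun z : V (n + 6) => z.2.2) h1
        simp only at e1 e2 e3
        exact Prod.ext (mu_inj e1) (Prod.ext (mu_inj e2) (mu_inj e3))
      have hv : v = v' := by
        have e1 := congrArg (fun z : V (n + 6) => z.1) h2
        have e2 := congrArg (fun z : V (n + 6) => z.2.1) h2
        have e3 := congrArg (fun z : V (n + 6) => z.2.2) h2
        simp only at e1 e2 e3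
        exact Prod.ext (mu_inj e1) (Prod.ext (mu_inj e2) (mu_inj e3))
      simp_all
    · rintro ⟨⟨u, v⟩, ⟨⟨ha, hb, hc, hd', he, hf⟩, hcond⟩⟩
      obtain ⟨a', ha'⟩ := mu_surj (n := n + 3) (k := 3) u.1 ha
      obtain ⟨b', hb'⟩ := mu_surj (n := n + 3) (k := 3) u.2.1 hb
      obtain ⟨c', hc'⟩ := mu_surj (n := n + 3) (k := 3) u.2.2 hc
      obtain ⟨d', hdd⟩ := mu_surj (n := n + 3) (k := 3) v.1 hd'
      obtain ⟨e', hee⟩ := mu_surj (n := n + 3) (k := 3) v.2.1 he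
      obtain ⟨f', hff⟩ := mu_surj (n := n + 3) (k := 3) v.2.2 hf
      have hu : mu3V n (a', b', c') = u := by
        rw [mu3V]; exact Prod.ext ha' (Prod.ext hb' hc')
      have hv : mu3V n (d', e', f') = v := by
        rw [mu3V]; exact Prod.ext hdd (Prod.ext hee hff)
      refine ⟨⟨((a', b', c'), (d', e', f')), by rw [hu, hv]; exact hcond⟩, ?_⟩
      apply Subtype.ext
      show (mu3V n (a', b', c'), mu3V n (d', e', f')) = (u, v)
      rw [hu, hv]
  rw [← Nat.card_congr eB, card_inner]

end Density

theorem density_of_zero_matrix :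
    Tendsto (fun K : ℕ => (eta 3 K (0 : Matrix (Fin 3) (Fin 3) (ZMod (2 ^ 3))) : ℝ)
        / (8192 * 64 ^ (K - 3))) atTop (nhds (1 / 57344)) := by
  have h4 : Tendsto (fun K : ℕ => ((1/4 : ℝ)) ^ (K - 6)) atTop (nhds 0) :=
    (tendsto_pow_atTop_nhds_zero_of_lt_one (by norm_num) (by norm_num)).comp
      (Filter.tendsto_sub_atTop_nat 6)
  have h8 : Tendsto (fun K : ℕ => ((1/8 : ℝ)) ^ (K - 6)) atTop (nhds 0) :=
    (tendsto_pow_atTop_nhds_zero_of_lt_one (by norm_num) (by norm_num)).comp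
      (Filter.tendsto_sub_atTop_nat 6)
  have hg : Tendsto (fun K : ℕ =>
      ((4 : ℝ) - 7 * (1/4 : ℝ) ^ (K - 6) + 3 * (1/8 : ℝ) ^ (K - 6)) / 229376) atTop
      (nhds (1 / 57344)) := by
    have hc := (((tendsto_const_nhds (x := (4:ℝ)) (f := atTop)).sub
      (h4.const_mul 7)).add (h8.const_mul 3)).div_const (229376 : ℝ)
    have hv : ((4 : ℝ) - 7 * 0 + 3 * 0) / 229376 = 1 / 57344 := by norm_num
    rw [hv] at hc
    exact hc.congr (fun K => by ring)
  apply Tendsto.congr' ?_ hg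
  rw [Filter.EventuallyEq, Filter.eventually_atTop]
  refine ⟨6, fun K hK => ?_⟩
  obtain ⟨n, rfl⟩ : ∃ n, K = n + 6 := ⟨K - 6, by omega⟩
  have hsub6 : n + 6 - 6 = n := by omega
  have hsub3 : n + 6 - 3 = n + 3 := by omega
  rw [hsub6, hsub3, Density.eta_eq n]
  have hN : (Density.Ncard n : ℝ) * 28 = 4 * 64 ^ n - 7 * 16 ^ n + 3 * 8 ^ n := by
    have h := Density.Ncard_closed n
    have h2 : ((28 * Density.Ncard n : ℤ) : ℝ)
        = ((4 * 64 ^ n - 7 * 16 ^ n + 3 * 8 ^ n : ℤ) : ℝ) := by rw [h]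
    push_cast at h2
    linarith
  have hN' : (Density.Ncard n : ℝ) = (4 * 64 ^ n - 7 * 16 ^ n + 3 * 8 ^ n) / 28 := by
    rw [eq_div_iff (by norm_num : (28:ℝ) ≠ 0)]
    exact hN
  have h64 : (64 : ℝ) ^ n ≠ 0 := pow_ne_zero _ (by norm_num)
  have e4 : (1/4 : ℝ) ^ n = 16 ^ n / 64 ^ n := by
    rw [show (1/4 : ℝ) = 16/64 by norm_num, div_pow]
  have e8 : (1/8 : ℝ) ^ n = 8 ^ n / 64 ^ n := by
    rw [show (1/8 : ℝ) = 8/64 by norm_num, div_pow]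
  push_cast
  rw [e4, e8, hN']
  rw [pow_add]
  field_simp
  ring
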